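/- arXiv:1411.4024 — 2 statements merged into one kernel-verified Lean document; each statement's English description precedes it below -/
import Mathlib

section
/- Let p = g_1 ⋯ g_r in F_2[x] with the g_i pairwise coprime and g_i(0) ≠ 0 for all i. Set N_i = ord(g_i) and N = lcm(N_1,...,N_r). Fix distinct integers 0 < e_2 < ... < e_{w-1} < N. Suppose there exist integers e_w^{(i)} with 0 < e_w^{(i)} < N_i such that (1) the polynomial 1 + x^{e_2} + ... + x^{e_{w-1}} + x^{e_w^{(i)}} is a multiple of g_i for each i, and (2) e_w^{(i)} ≡ e_w^{(j)} (mod gcd(N_i, N_j)) for all i, j. Let e_w be the unique integer with 0 ≤ e_w < N satisfying e_w ≡ e_w^{(i)} (mod N_i) for all i (which exists by the Chinese Remainder Theorem). Then 1 + x^{e_2} + ... + x^{e_{w-1}} + x^{e_w} is a multiple of p. -/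
open Polynomial

/-- The order of a binary polynomial `p`: the least positive `N` with `p ∣ X^N + 1`. -/
noncomputable def pord (p : Polynomial (ZMod 2)) : ℕ :=
  sInf {N : ℕ | 0 < N ∧ p ∣ X ^ N + 1}

lemma pord_spec (g : Polynomial (ZMod 2)) (h0 : g.eval 0 ≠ 0) :
    0 < pord g ∧ g ∣ X ^ pord g + 1 := by
  have hg : g ≠ 0 := fun h => h0 (by simp [h])
  have hcop : IsCoprime (X : Polynomial (ZMod 2)) g := by
    rw [Polynomial.irreducible_X.coprime_iff_not_dvd, Polynomial.X_dvd_iff]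
    rwa [← Polynomial.coeff_zero_eq_eval_zero] at h0
  have hfin : Finite (AdjoinRoot g) := by
    have pb := AdjoinRoot.powerBasis hg
    have : Module.Finite (ZMod 2) (AdjoinRoot g) := pb.finite
    exact Module.finite_of_finite (ZMod 2)
  have hu : IsUnit (AdjoinRoot.mk g X) := by
    obtain ⟨u, v, huv⟩ := hcop
    refine IsUnit.of_mul_eq_one (AdjoinRoot.mk g u) ?_
    have := congrArg (AdjoinRoot.mk g) huv
    simpa [map_add, map_mul, AdjoinRoot.mk_self, mul_comm] using this
  obtain ⟨z, hz⟩ := hu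
  have hord : 0 < orderOf z := orderOf_pos z
  have hzk : (AdjoinRoot.mk g) (X ^ orderOf z + 1) = 0 := by
    have h2 : (AdjoinRoot.mk g X) ^ orderOf z = 1 := by
      rw [← hz, ← Units.val_pow_eq_pow_val, pow_orderOf_eq_one z, Units.val_one]
    have hpoly : (1 + 1 : Polynomial (ZMod 2)) = 0 := CharTwo.add_self_eq_zero 1
    have h3 : (1 + 1 : AdjoinRoot g) = 0 := by
      have := congrArg (AdjoinRoot.mk g) hpoly
      simpa using this
    rw [map_add, map_pow, h2, map_one, h3]
  have hdvd : g ∣ X ^ orderOf z + 1 := by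
    rwa [AdjoinRoot.mk_eq_zero] at hzk
  have hne : {N : ℕ | 0 < N ∧ g ∣ X ^ N + 1}.Nonempty := ⟨orderOf z, hord, hdvd⟩
  exact Nat.sInf_mem hne

lemma dvd_X_pow_add (g : Polynomial (ZMod 2)) (n a b : ℕ)
    (hd : g ∣ X ^ n + 1) (h : a ≡ b [MOD n]) : g ∣ X ^ a + X ^ b := by
  wlog hab : a ≤ b generalizing a b
  · rw [add_comm]
    exact this b a h.symm (by omega)
  obtain ⟨k, hk⟩ : n ∣ (b - a) := (Nat.modEq_iff_dvd' hab).mp h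
  have hb : b = a + n * k := by omega
  have h1 : ((X : Polynomial (ZMod 2)) ^ n + 1) ∣ ((X ^ n) ^ k + 1) := by
    have := sub_dvd_pow_sub_pow ((X : Polynomial (ZMod 2)) ^ n) 1 k
    simpa [CharTwo.sub_eq_add] using this
  have h2 : (X : Polynomial (ZMod 2)) ^ a + X ^ b = X ^ a * ((X ^ n) ^ k + 1) := by
    rw [hb, pow_add, ← pow_mul]
    ring
  rw [h2]
  exact Dvd.dvd.trans (hd.trans h1) (dvd_mul_left _ _)

theorem stmt_5 (r : ℕ) (g : Fin r → Polynomial (ZMod 2))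
    (hcop : ∀ i j, i ≠ j → IsCoprime (g i) (g j))
    (h0 : ∀ i, (g i).eval 0 ≠ 0)
    (p : Polynomial (ZMod 2)) (hp : p = ∏ i, g i)
    (N : ℕ) (hN : N = Finset.univ.lcm (fun i => pord (g i)))
    (w : ℕ) (hw : 3 ≤ w)
    (s : Finset ℕ) (hscard : s.card = w - 2) (hs : ∀ x ∈ s, 0 < x ∧ x < N)
    (ew : Fin r → ℕ) (hewlt : ∀ i, 0 < ew i ∧ ew i < pord (g i))
    (hmul : ∀ i, g i ∣ 1 + (∑ x ∈ s, (X : Polynomial (ZMod 2)) ^ x) + X ^ ew i)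
    (hcong2 : ∀ i j, ew i ≡ ew j [MOD Nat.gcd (pord (g i)) (pord (g j))])
    (e : ℕ) (helt : e < N) (hecong : ∀ i, e ≡ ew i [MOD pord (g i)]) :
    p ∣ 1 + (∑ x ∈ s, (X : Polynomial (ZMod 2)) ^ x) + X ^ e := by
  rw [hp]
  apply Finset.prod_dvd_of_coprime
  · intro i _ j _ hij
    exact hcop i j hij
  · intro i _
    obtain ⟨hpos, hdvd⟩ := pord_spec (g i) (h0 i)
    have hXe : g i ∣ X ^ e + X ^ ew i := dvd_X_pow_add (g i) _ _ _ hdvd (hecong i)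
    have key : (1 + (∑ x ∈ s, (X : Polynomial (ZMod 2)) ^ x) + X ^ ew i) +
        (X ^ e + X ^ ew i) = 1 + (∑ x ∈ s, (X : Polynomial (ZMod 2)) ^ x) + X ^ e := by
      have := CharTwo.add_self_eq_zero (R := Polynomial (ZMod 2)) (X ^ ew i)
      linear_combination this
    rw [← key]
    exact dvd_add (hmul i) hXe
end

section
/- Let α be a primitive element of F_{2^n}, N = 2^n - 1, and w ≥ 3. The number of (w-2)-tuples of integers (e_2, ..., e_{w-1}) with 0 < e_2 < ... < e_{w-1} < N such that 1 + α^{e_2} + ... + α^{e_{w-1}} ≠ 0 (so that its discrete logarithm to base α is defined) is at least binom(N-1, w-2) - binom(N-1, w-3). -/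
open scoped Classical

theorem stmt_11 (n w : ℕ) (hn : 0 < n) (hw : 3 ≤ w)
    (α : GaloisField 2 n) (hα : orderOf α = 2 ^ n - 1)
    (N : ℕ) (hN : N = 2 ^ n - 1) :
    (N - 1).choose (w - 2) - (N - 1).choose (w - 3) ≤
      (((Finset.Icc 1 (N - 1)).powersetCard (w - 2)).filter
        (fun s => (1 + ∑ x ∈ s, α ^ x) ≠ 0)).card := by
  have hN1 : 1 ≤ N := by
    subst hN
    have := Nat.one_lt_two_pow_iff.mpr hn.ne'
    omega
  set T := (Finset.Icc 1 (N - 1)).powersetCard (w - 2) with hT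
  have hTcard : T.card = (N - 1).choose (w - 2) := by
    rw [hT, Finset.card_powersetCard, Nat.card_Icc]
    congr 1
  -- bad sets: those with 1 + sum = 0
  have hchar : ∀ a : GaloisField 2 n, -a = a := by
    intro a
    exact CharTwo.neg_eq a
  have hbad : (T.filter (fun s => (1 + ∑ x ∈ s, α ^ x) = 0)).card
      ≤ (N - 1).choose (w - 3) := by
    have hsub : (N - 1).choose (w - 3)
        = ((Finset.Icc 1 (N - 1)).powersetCard (w - 3)).card := by
      rw [Finset.card_powersetCard, Nat.card_Icc]
      congr 1
    rw [hsub]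
    -- key facts about a bad set s
    have key : ∀ s ∈ T.filter (fun s => (1 + ∑ x ∈ s, α ^ x) = 0),
        ∃ hne : s.Nonempty, s ⊆ Finset.Icc 1 (N - 1) ∧ s.card = w - 2 ∧
          α ^ (s.max' hne) = 1 + ∑ x ∈ s.erase (s.max' hne), α ^ x := by
      intro s hs
      rw [Finset.mem_filter, hT, Finset.mem_powersetCard] at hs
      obtain ⟨⟨hsub', hcard⟩, hzero⟩ := hs
      have hne : s.Nonempty := by
        rw [← Finset.card_pos, hcard]; omega
      refine ⟨hne, hsub', hcard, ?_⟩
      have hmem := s.max'_mem hne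
      have hsum : ∑ x ∈ s, α ^ x = α ^ (s.max' hne) + ∑ x ∈ s.erase (s.max' hne), α ^ x :=
        (Finset.add_sum_erase s _ hmem).symm
      have h1 : ∑ x ∈ s, α ^ x = 1 := by
        have := hzero
        have : ∑ x ∈ s, α ^ x = -1 := by linear_combination hzero
        rw [this, hchar]
      rw [h1] at hsum
      -- 1 = α^max + rest; in char 2, α^max = 1 + rest
      have : α ^ (s.max' hne) = 1 - ∑ x ∈ s.erase (s.max' hne), α ^ x := by
        linear_combination - hsum
      rw [this, sub_eq_add_neg, hchar]
    apply Finset.card_le_card_of_injOn (fun s => s.erase (if h : s.Nonempty then s.max' h else 0))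
    · intro s hs
      obtain ⟨hne, hsub', hcard, _⟩ := key s hs
      simp only [Finset.mem_coe]
      rw [dif_pos hne, Finset.mem_powersetCard]
      constructor
      · exact (Finset.erase_subset _ _).trans hsub'
      · rw [Finset.card_erase_of_mem (s.max'_mem hne), hcard]
        omega
    · intro s hs t ht heq
      obtain ⟨hsne, hssub, _, hskey⟩ := key s hs
      obtain ⟨htne, htsub, _, htkey⟩ := key t ht
      simp only [dif_pos hsne, dif_pos htne] at heq
      have hval : α ^ (s.max' hsne) = α ^ (t.max' htne) := by
        rw [hskey, htkey, heq]
      have hmax : s.max' hsne = t.max' htne := by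
        have hord : Set.InjOn (fun k => α ^ k) (Set.Iio (orderOf α)) :=
          pow_injOn_Iio_orderOf
        have hs' : s.max' hsne ∈ Set.Iio (orderOf α) := by
          have := hssub (s.max'_mem hsne)
          rw [Finset.mem_Icc] at this
          simp only [Set.mem_Iio, hα]
          omega
        have ht' : t.max' htne ∈ Set.Iio (orderOf α) := by
          have := htsub (t.max'_mem htne)
          rw [Finset.mem_Icc] at this
          simp only [Set.mem_Iio, hα]
          omega
        exact hord hs' ht' hval
      have : s = insert (s.max' hsne) (s.erase (s.max' hsne)) :=
        (Finset.insert_erase (s.max'_mem hsne)).symm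
      rw [this, heq, hmax, Finset.insert_erase (t.max'_mem htne)]
  have hcompl : (T.filter (fun s => (1 + ∑ x ∈ s, α ^ x) ≠ 0))
      = T \ (T.filter (fun s => (1 + ∑ x ∈ s, α ^ x) = 0)) := by
    ext s
    simp only [Finset.mem_filter, Finset.mem_sdiff, ne_eq]
    tauto
  have hgood : (T.filter (fun s => (1 + ∑ x ∈ s, α ^ x) ≠ 0)).card
      = T.card - (T.filter (fun s => (1 + ∑ x ∈ s, α ^ x) = 0)).card := by
    rw [hcompl, Finset.card_sdiff_of_subset (Finset.filter_subset _ _)]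
  have hle : (T.filter (fun s => (1 + ∑ x ∈ s, α ^ x) = 0)).card ≤ T.card :=
    Finset.card_filter_le _ _
  omega
end
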